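/- arXiv:1902.07981 — 4 statements merged into one kernel-verified Lean document; each statement's English description precedes it below -/
import Mathlib

section
/- Let E be a positive semidefinite Hermitian 2×2 complex matrix such that ⟪ψᵢ, (E ⊗ I₂ ⊗ I₂) ψⱼ⟫ = 0 for all i ≠ j in {1,…,6}, where ψ₁,…,ψ₆ are the six product states below. Then E is a scalar multiple of the 2×2 identity matrix, i.e., the first party can only start with a trivial measurement while preserving the orthogonality of these states. -/
open Matrix
open scoped Kronecker ComplexOrder

/-- The basis state `|0⟩` of `ℂ²`. -/
def ket0 : Fin 2 → ℂ := ![1, 0]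

/-- The basis state `|1⟩` of `ℂ²`. -/
def ket1 : Fin 2 → ℂ := ![0, 1]

/-- The Kronecker (tensor) product of three vectors of `ℂ²`,
an element of `ℂ² ⊗ ℂ² ⊗ ℂ²` realized as functions on `Fin 2 × Fin 2 × Fin 2`. -/
def triple (a b c : Fin 2 → ℂ) : Fin 2 × Fin 2 × Fin 2 → ℂ :=
  fun x => a x.1 * b x.2.1 * c x.2.2

/-- The six product states of equation (1) in `ℂ² ⊗ ℂ² ⊗ ℂ²`. -/
def ψ : Fin 6 → (Fin 2 × Fin 2 × Fin 2 → ℂ)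
  | 0 => triple ket0 ket1 (ket0 + ket1)
  | 1 => triple ket0 ket1 (ket0 - ket1)
  | 2 => triple (ket0 + ket1) ket0 ket1
  | 3 => triple (ket0 - ket1) ket0 ket1
  | 4 => triple ket1 (ket0 + ket1) ket0
  | 5 => triple ket1 (ket0 - ket1) ket0


/-- Any positive semidefinite operator `E` on the first qubit that preserves the
orthogonality of the six states `ψ₁, …, ψ₆` (i.e. `⟪ψᵢ, (E ⊗ I₂ ⊗ I₂) ψⱼ⟫ = 0` for
all `i ≠ j`) is proportional to the identity: the first party can only start with a
trivial measurement. -/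
theorem first_party_measurement_trivial
    (E : Matrix (Fin 2) (Fin 2) ℂ) (hE : E.PosSemidef)
    (h : ∀ i j : Fin 6, i ≠ j →
      star (ψ i) ⬝ᵥ
        ((E ⊗ₖ ((1 : Matrix (Fin 2) (Fin 2) ℂ) ⊗ₖ (1 : Matrix (Fin 2) (Fin 2) ℂ))) *ᵥ ψ j)
        = 0) :
    ∃ c : ℂ, E = c • (1 : Matrix (Fin 2) (Fin 2) ℂ) := by
  have h04 := h 0 4 (by decide)
  have h40 := h 4 0 (by decide)
  have h23 := h 2 3 (by decide)
  simp only [ψ, triple, ket0, ket1, Matrix.mulVec, Matrix.kroneckerMap_apply,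
    dotProduct, Fintype.sum_prod_type, Fin.sum_univ_two, Matrix.one_apply,
    Pi.add_apply, Pi.sub_apply, Pi.star_apply, Matrix.cons_val_zero, Matrix.cons_val_one,
    Matrix.head_cons, star_zero, star_one, star_mul', star_add, star_sub] at h04 h40 h23
  push_cast at h04 h40 h23
  ring_nf at h04 h40 h23
  refine ⟨E 0 0, ?_⟩
  ext i j
  fin_cases i <;> fin_cases j <;>
    simp [Matrix.one_apply] <;> first
    | linear_combination h04
    | linear_combination h40
    | linear_combination h04 + h40 + h23
    | linear_combination -h23 - h04 + h40
end

section
/- Let E be a positive semidefinite Hermitian 2×2 complex matrix such that ⟪ψᵢ, (I₂ ⊗ E ⊗ I₂) ψⱼ⟫ = 0 for all i ≠ j in {1,…,6}, where ψ₁,…,ψ₆ are the six product states below. Then E is a scalar multiple of the 2×2 identity matrix, i.e., the second party can only start with a trivial measurement while preserving the orthogonality of these states. -/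
open Matrix
open scoped Kronecker ComplexOrder

/-- Any positive semidefinite operator `E` on the second qubit that preserves the
orthogonality of the six states `ψ₁, …, ψ₆` (i.e. `⟪ψᵢ, (I₂ ⊗ E ⊗ I₂) ψⱼ⟫ = 0` for
all `i ≠ j`) is proportional to the identity: the second party can only start with a
trivial measurement. -/
theorem second_party_measurement_trivial
    (E : Matrix (Fin 2) (Fin 2) ℂ) (hE : E.PosSemidef)
    (h : ∀ i j : Fin 6, i ≠ j →
      star (ψ i) ⬝ᵥ
        (((1 : Matrix (Fin 2) (Fin 2) ℂ) ⊗ₖ (E ⊗ₖ (1 : Matrix (Fin 2) (Fin 2) ℂ))) *ᵥ ψ j)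
        = 0) :
    ∃ c : ℂ, E = c • (1 : Matrix (Fin 2) (Fin 2) ℂ) := by
  have h1 := h 0 2 (by decide)
  have h2 := h 2 0 (by decide)
  have h3 := h 4 5 (by decide)
  simp [ψ, triple, ket0, ket1, dotProduct, Matrix.mulVec, Matrix.kroneckerMap_apply,
    Fintype.sum_prod_type, Fin.sum_univ_two, Matrix.one_apply] at h1 h2 h3
  have e11 : E 1 1 = E 0 0 := by linear_combination h1 - h2 - h3
  refine ⟨E 0 0, ?_⟩
  ext i j
  fin_cases i <;> fin_cases j <;> simp [Matrix.one_apply, h1, h2, e11]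
end

section
/- Let E be a positive semidefinite Hermitian 2×2 complex matrix such that ⟪ψᵢ, (I₂ ⊗ I₂ ⊗ E) ψⱼ⟫ = 0 for all i ≠ j in {1,…,6}, where ψ₁,…,ψ₆ are the six product states below. Then E is a scalar multiple of the 2×2 identity matrix, i.e., the third party can only start with a trivial measurement while preserving the orthogonality of these states. -/
open Matrix
open scoped Kronecker ComplexOrder

/-- Any positive semidefinite operator `E` on the third qubit that preserves the
orthogonality of the six states `ψ₁, …, ψ₆` (i.e. `⟪ψᵢ, (I₂ ⊗ I₂ ⊗ E) ψⱼ⟫ = 0` for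
all `i ≠ j`) is proportional to the identity: the third party can only start with a
trivial measurement. -/
theorem third_party_measurement_trivial
    (E : Matrix (Fin 2) (Fin 2) ℂ) (hE : E.PosSemidef)
    (h : ∀ i j : Fin 6, i ≠ j →
      star (ψ i) ⬝ᵥ
        (((1 : Matrix (Fin 2) (Fin 2) ℂ) ⊗ₖ ((1 : Matrix (Fin 2) (Fin 2) ℂ) ⊗ₖ E)) *ᵥ ψ j)
        = 0) :
    ∃ c : ℂ, E = c • (1 : Matrix (Fin 2) (Fin 2) ℂ) := by
  have h01 := h 0 1 (by decide)
  have h10 := h 1 0 (by decide)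
  have h24 := h 2 4 (by decide)
  have h42 := h 4 2 (by decide)
  simp [ψ, triple, ket0, ket1, dotProduct, mulVec, Matrix.one_apply,
    Fintype.sum_prod_type, Fin.sum_univ_two] at h01 h10 h24 h42
  refine ⟨E 0 0, ?_⟩
  ext i j
  fin_cases i <;> fin_cases j <;>
    simp [Matrix.one_apply] <;> first
      | linear_combination h24
      | linear_combination h42
      | linear_combination -(h01 + h10) / 2
end

section
/- Let H be a finite-dimensional complex inner product space with an orthonormal basis B, let ψ₁, …, ψ_k be k distinct elements of B, let d ≥ 1, and let α, β be unit vectors in ℂ^d with ⟪α, β⟫ ≠ 0. For each i ∈ {1,…,k} let αᵢ ∈ {α, β}. Then there exists an orthonormal basis C of H ⊗ ℂ^d such that every element of C is a simple tensor b ⊗ w with b ∈ B and w ∈ ℂ^d, and such that ψᵢ ⊗ αᵢ ∈ C for every i ∈ {1,…,k}. In particular, if the original set of states is completable (extends to an orthonormal product basis), then the appended set {ψᵢ ⊗ αᵢ} is also completable. -/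
local notation "⟪" x ", " y "⟫" => @inner ℂ _ _ x y

/-!
Since the `ψᵢ` are distinct elements of `B`, each basis vector `b ∈ B` carries at most one
prescribed local state, a unit vector `w_b ∈ ℂ^d` (take `α` when there is none). Extending each
`w_b` to an orthonormal basis `(W_b m)ₘ` of `ℂ^d`, the products `b ⊗ W_b m` form an orthonormal
product basis of `H ⊗ ℂ^d` containing every `ψᵢ ⊗ aᵢ`.
-/

section

variable {𝕜 E : Type*} [RCLike 𝕜] [NormedAddCommGroup E] [InnerProductSpace 𝕜 E]

theorem exists_orthonormalBasis_apply_eq [FiniteDimensional 𝕜 E] {κ : Type*} [Fintype κ]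
    (hcard : Module.finrank 𝕜 E = Fintype.card κ) (m₀ : κ) {v : E} (hv : ‖v‖ = 1) :
    ∃ W : OrthonormalBasis κ 𝕜 E, W m₀ = v := by
  have hsingle : Orthonormal 𝕜 (({m₀} : Set κ).domRestrict fun _ => v) :=
    orthonormal_subsingleton_iff.mpr fun _ => hv
  obtain ⟨W, hW⟩ := hsingle.exists_orthonormalBasis_extension_of_card_eq hcard
  exact ⟨W, hW m₀ rfl⟩

theorem Orthonormal.inner_mul_inner_eq_ite {H ι κ : Type*} [NormedAddCommGroup H]
    [InnerProductSpace 𝕜 H] [DecidableEq ι] [DecidableEq κ] {v : ι → H} {w : ι → κ → E}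
    (hv : Orthonormal 𝕜 v) (hw : ∀ j, Orthonormal 𝕜 (w j)) (j j' : ι) (m m' : κ) :
    inner 𝕜 (v j) (v j') * inner 𝕜 (w j m) (w j' m') = if (j, m) = (j', m') then 1 else 0 := by
  by_cases hj : j = j'
  · subst hj
    simp [orthonormal_iff_ite.mp (hw j), hv.1 j]
  · simp [orthonormal_iff_ite.mp hv, hj]

end

theorem appended_set_completable_general
    {H : Type*} [NormedAddCommGroup H] [InnerProductSpace ℂ H] [FiniteDimensional ℂ H]
    {ι : Type*} [Fintype ι] (B : OrthonormalBasis ι ℂ H)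
    (k d : ℕ) (hd : 1 ≤ d)
    (ψ : Fin k → H) (hψB : ∀ i, ψ i ∈ Set.range B) (hψinj : Function.Injective ψ)
    (α β : EuclideanSpace ℂ (Fin d)) (hα : ‖α‖ = 1) (hβ : ‖β‖ = 1)
    (a : Fin k → EuclideanSpace ℂ (Fin d)) (ha : ∀ i, a i = α ∨ a i = β) :
    ∃ (κ : Type) (_ : Fintype κ) (_ : DecidableEq κ) (C : κ → H × EuclideanSpace ℂ (Fin d)),
      Fintype.card κ = Fintype.card ι * d ∧
      (∀ t, (C t).1 ∈ Set.range B) ∧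
      (∀ t t' : κ, ⟪(C t).1, (C t').1⟫ * ⟪(C t).2, (C t').2⟫
        = if t = t' then 1 else 0) ∧
      (∀ i : Fin k, ∃ t, C t = (ψ i, a i)) := by
  classical
  choose idx hidx using hψB
  have hidx_inj : Function.Injective idx := fun i i' h => hψinj <| by rw [← hidx, h, hidx]
  have hlocal_norm : ∀ j, ‖Function.extend idx a (fun _ => α) j‖ = 1 := by
    intro j
    by_cases hj : ∃ i, idx i = j
    · obtain ⟨i, rfl⟩ := hj
      rw [hidx_inj.extend_apply]
      exact (ha i).elim (· ▸ hα) (· ▸ hβ)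
    · rw [Function.extend_apply' _ _ _ hj]
      exact hα
  choose W hW using fun j =>
    exists_orthonormalBasis_apply_eq finrank_euclideanSpace ⟨0, hd⟩ (hlocal_norm j)
  let e := (Fintype.equivFin ι).symm
  refine ⟨Fin (Fintype.card ι) × Fin d, inferInstance, inferInstance,
    fun t => (B (e t.1), W (e t.1) t.2), by simp, fun t => ⟨_, rfl⟩,
    fun t t' => (B.orthonormal.comp e e.injective).inner_mul_inner_eq_ite
      (fun j => (W (e j)).orthonormal) t.1 t'.1 t.2 t'.2,
    fun i => ⟨(e.symm (idx i), ⟨0, hd⟩), ?_⟩⟩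
  simp [e, hW, hidx, hidx_inj.extend_apply]

/-- **Completability is preserved by appending nonorthogonal local states.**
Let `B` be an orthonormal basis of a finite-dimensional complex inner product space
`H`, let `ψ₁, …, ψ_k` be distinct elements of `B`, let `α, β` be nonorthogonal unit
vectors of `ℂ^d` (`d ≥ 1`) and choose `aᵢ ∈ {α, β}` for each `i`.  Then there is an
orthonormal basis `C` of `H ⊗ ℂ^d` consisting of simple tensors `b ⊗ w` with `b ∈ B`
and containing every `ψᵢ ⊗ aᵢ`.  Simple tensors are encoded as pairs `(b, w)`; since
`⟪u ⊗ x, v ⊗ y⟫ = ⟪u, v⟫·⟪x, y⟫`, the basis property is expressed by the family of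
pairs being orthonormal for this product and of cardinality `dim H · d`. -/
theorem appended_set_completable
    {H : Type*} [NormedAddCommGroup H] [InnerProductSpace ℂ H] [FiniteDimensional ℂ H]
    {ι : Type*} [Fintype ι] (B : OrthonormalBasis ι ℂ H)
    (k d : ℕ) (hd : 1 ≤ d)
    (ψ : Fin k → H) (hψB : ∀ i, ψ i ∈ Set.range B) (hψinj : Function.Injective ψ)
    (α β : EuclideanSpace ℂ (Fin d)) (hα : ‖α‖ = 1) (hβ : ‖β‖ = 1)
    (hαβ : ⟪α, β⟫ ≠ 0)
    (a : Fin k → EuclideanSpace ℂ (Fin d)) (ha : ∀ i, a i = α ∨ a i = β) :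
    ∃ (κ : Type) (_ : Fintype κ) (_ : DecidableEq κ) (C : κ → H × EuclideanSpace ℂ (Fin d)),
      Fintype.card κ = Fintype.card ι * d ∧
      (∀ t, (C t).1 ∈ Set.range B) ∧
      (∀ t t' : κ, ⟪(C t).1, (C t').1⟫ * ⟪(C t).2, (C t').2⟫
        = if t = t' then 1 else 0) ∧
      (∀ i : Fin k, ∃ t, C t = (ψ i, a i)) :=
  appended_set_completable_general B k d hd ψ hψB hψinj α β hα hβ a ha
end
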